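/- arXiv:1507.03635 — 4 statements merged into one kernel-verified Lean document; each statement's English description precedes it below -/
import Mathlib

section
/- Let M be a smooth manifold and let 𝓕 be a sheaf of local vector fields on M having the unique continuation property. If 𝔤⁽¹⁾ and 𝔤⁽²⁾ are transports of 𝓕-germs along a continuous path γ : [a,b] → M such that 𝔤⁽¹⁾_{t*} = 𝔤⁽²⁾_{t*} for some t* ∈ [a,b], then 𝔤⁽¹⁾_t = 𝔤⁽²⁾_t for all t ∈ [a,b]. -/
open Set Manifold Topology

noncomputable section

variable {E : Type*} [NormedAddCommGroup E] [NormedSpace ℝ E]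
  {H : Type*} [TopologicalSpace H]

/-- A (raw) vector field on the manifold `M`, given by a choice of tangent vector at every
point.  A *local* vector field defined on an open set `U ⊆ M` is represented by such a global
assignment, where only the values on `U` are relevant. -/
abbrev VF (I : ModelWithCorners ℝ E H) (M : Type*) [TopologicalSpace M] [ChartedSpace H M] :
    Type _ :=
  (x : M) → TangentSpace I x

variable (I : ModelWithCorners ℝ E H) (M : Type*) [TopologicalSpace M] [ChartedSpace H M]
  [IsManifold I ((⊤ : ℕ∞) : WithTop ℕ∞) M]

/-- Smoothness (`C^∞`) of a vector field on a subset `U` of `M`, as smoothness of the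
corresponding section of the tangent bundle. -/
def IsSmoothVFOn (X : VF I M) (U : Set M) : Prop :=
  ContMDiffOn I I.tangent (⊤ : ℕ∞) (fun x => (⟨x, X x⟩ : TangentBundle I M)) U

/-- A sheaf of local vector fields on the manifold `M`: to every connected open set `U ⊆ M` it
assigns a linear subspace `carrier U` of the smooth vector fields on `U` (represented by global
assignments of tangent vectors, two of which describe the same local field on `U` iff they agree
on `U`), closed under restriction to connected open subsets and satisfying the gluing axiom. -/
structure VFSheaf where
  carrier : Set M → Set (VF I M)
  smooth_mem : ∀ U, IsOpen U → IsConnected U → ∀ X ∈ carrier U, IsSmoothVFOn I M X U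
  zero_mem : ∀ U, IsOpen U → IsConnected U → (0 : VF I M) ∈ carrier U
  add_mem : ∀ U, IsOpen U → IsConnected U → ∀ X ∈ carrier U, ∀ Y ∈ carrier U, X + Y ∈ carrier U
  smul_mem : ∀ U, IsOpen U → IsConnected U → ∀ (c : ℝ), ∀ X ∈ carrier U, c • X ∈ carrier U
  congr_mem : ∀ U, IsOpen U → IsConnected U → ∀ X ∈ carrier U, ∀ Y : VF I M,
    (∀ x ∈ U, Y x = X x) → Y ∈ carrier U
  restrict_mem : ∀ U, IsOpen U → IsConnected U → ∀ V, IsOpen V → IsConnected V → V ⊆ U →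
    ∀ X ∈ carrier U, X ∈ carrier V
  glue_mem : ∀ U, IsOpen U → IsConnected U → ∀ S : Set (Set M),
    (∀ V ∈ S, IsOpen V ∧ IsConnected V) → U = ⋃₀ S → ∀ X : VF I M, IsSmoothVFOn I M X U →
    (∀ V ∈ S, X ∈ carrier V) → X ∈ carrier U

variable {I M}

/-- The unique continuation property for a sheaf of local vector fields: a field of the sheaf
on a connected open set vanishing on some non-empty open subset vanishes identically. -/
def VFSheaf.UniqueContinuation (F : VFSheaf I M) : Prop :=
  ∀ U, IsOpen U → IsConnected U → ∀ X ∈ F.carrier U,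
    (∃ V : Set M, V.Nonempty ∧ IsOpen V ∧ V ⊆ U ∧ ∀ x ∈ V, X x = 0) → ∀ x ∈ U, X x = 0

variable (I M) in
/-- Restriction of global tangent-vector assignments to a subset `U`, as a linear map. -/
def resVF (U : Set M) : VF I M →ₗ[ℝ] ((x : U) → TangentSpace I (x : M)) where
  toFun X := fun x => X x
  map_add' _ _ := rfl
  map_smul' _ _ := rfl

/-- The dimension (as a cardinal) of the space `𝓕(U)` of local fields of the sheaf `F` on `U`,
computed as the rank of the space of restrictions to `U` of members of `F.carrier U`. -/
def fdim (F : VFSheaf I M) (U : Set M) : Cardinal :=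
  Module.rank ℝ ↥(Submodule.span ℝ (resVF I M U '' F.carrier U))

/-- A sheaf of local vector fields has bounded rank if the dimensions of the spaces `𝓕(U)`,
`U` connected open, are uniformly bounded. -/
def VFSheaf.BoundedRank (F : VFSheaf I M) : Prop :=
  ∃ N : ℕ, ∀ U : Set M, IsOpen U → IsConnected U → fdim F U ≤ (N : Cardinal)

/-- A sheaf of local vector fields is admissible if it has the unique continuation property
and bounded rank. -/
def VFSheaf.Admissible (F : VFSheaf I M) : Prop :=
  F.UniqueContinuation ∧ F.BoundedRank

/-- `κ^𝓕_p`: the supremum (= maximum) of `dim 𝓕(U)` over connected open neighbourhoods `U`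
of `p`. -/
def kappa (F : VFSheaf I M) (p : M) : Cardinal :=
  ⨆ U : {U : Set M // IsOpen U ∧ IsConnected U ∧ p ∈ U}, fdim F (U : Set M)

/-- A sheaf of local vector fields is regular if `p ↦ κ^𝓕_p` is constant on `M`. -/
def VFSheaf.Regular (F : VFSheaf I M) : Prop :=
  ∀ p q : M, kappa F p = kappa F q

section Germs

variable (I M) in
/-- The subspace of tangent-vector assignments vanishing on some connected open neighbourhood
of `p`; the quotient by this subspace is the space of germs at `p`. -/
def germNull [LocallyConnectedSpace M] (p : M) : Submodule ℝ (VF I M) where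
  carrier := {X | ∃ V : Set M, IsOpen V ∧ IsConnected V ∧ p ∈ V ∧ ∀ x ∈ V, X x = 0}
  zero_mem' :=
    ⟨connectedComponentIn univ p, isOpen_univ.connectedComponentIn,
      isConnected_connectedComponentIn_iff.mpr (mem_univ p),
      mem_connectedComponentIn (mem_univ p), fun _ _ => rfl⟩
  add_mem' := by
    rintro X Y ⟨V₁, hV₁o, hV₁c, hpV₁, hX⟩ ⟨V₂, hV₂o, hV₂c, hpV₂, hY⟩
    refine ⟨connectedComponentIn (V₁ ∩ V₂) p, (hV₁o.inter hV₂o).connectedComponentIn,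
      isConnected_connectedComponentIn_iff.mpr ⟨hpV₁, hpV₂⟩,
      mem_connectedComponentIn ⟨hpV₁, hpV₂⟩, fun x hx => ?_⟩
    have hx' := connectedComponentIn_subset (V₁ ∩ V₂) p hx
    show X x + Y x = 0
    rw [hX x hx'.1, hY x hx'.2, add_zero]
  smul_mem' := by
    rintro c X ⟨V, hVo, hVc, hpV, hX⟩
    exact ⟨V, hVo, hVc, hpV, fun x hx => by show c • X x = 0; rw [hX x hx, smul_zero]⟩

variable (I M) in
/-- The space of germs at `p` of (arbitrary) local vector fields on `M`. -/
abbrev GermSpace [LocallyConnectedSpace M] (p : M) : Type _ :=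
  VF I M ⧸ germNull I M p

variable (I M) in
/-- The germ at `p` of a local vector field, as a linear map. -/
def germAt [LocallyConnectedSpace M] (p : M) : VF I M →ₗ[ℝ] GermSpace I M p :=
  (germNull I M p).mkQ

/-- `𝔊^𝓕_p`: the space of germs at `p` of local `𝓕`-fields of the sheaf `F`, i.e. germs at `p`
of fields `K ∈ 𝓕(U)` with `U` a connected open neighbourhood of `p`. -/
def stalk [LocallyConnectedSpace M] (F : VFSheaf I M) (p : M) :
    Submodule ℝ (GermSpace I M p) :=
  Submodule.span ℝ {g | ∃ U : Set M, ∃ X : VF I M,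
    IsOpen U ∧ IsConnected U ∧ p ∈ U ∧ X ∈ F.carrier U ∧ g = germAt I M p X}

/-- A connected open set `U ∋ p` is `𝓕`-special for `p` if the (linear) germ map
`𝓕(U) → 𝔊^𝓕_p` is a linear isomorphism, i.e. it is injective (fields in `𝓕(U)` with the same
germ at `p` agree on `U`) and surjective onto the space of `𝓕`-germs at `p`. -/
def IsSpecial [LocallyConnectedSpace M] (F : VFSheaf I M) (U : Set M) (p : M) : Prop :=
  IsOpen U ∧ IsConnected U ∧ p ∈ U ∧
    (∀ K₁ ∈ F.carrier U, ∀ K₂ ∈ F.carrier U,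
      germAt I M p K₁ = germAt I M p K₂ → ∀ x ∈ U, K₁ x = K₂ x) ∧
    (∀ g ∈ stalk F p, ∃ K ∈ F.carrier U, germAt I M p K = g)

/-- A transport of `𝓕`-germs along the curve `γ : [a,b] → M`: a family of germs
`g t ∈ 𝔊^𝓕_{γ t}` which is locally induced by a single local field of the sheaf `F`. -/
def IsTransport [LocallyConnectedSpace M] (F : VFSheaf I M) (a b : ℝ) (γ : ℝ → M)
    (g : (t : ℝ) → GermSpace I M (γ t)) : Prop :=
  ∀ t₀ ∈ Icc a b, ∃ ε > (0 : ℝ), ∃ U : Set M, ∃ K : VF I M,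
    IsOpen U ∧ IsConnected U ∧ K ∈ F.carrier U ∧
    ∀ t ∈ Ioo (t₀ - ε) (t₀ + ε) ∩ Icc a b, γ t ∈ U ∧ g t = germAt I M (γ t) K

end Germs

/-!
If `K₁ ∈ 𝓕(U₁)` and `K₂ ∈ 𝓕(U₂)` represent two transports near `γ(t₀)`, then `K₁ - K₂` lies in
`𝓕(W)` for the connected component `W` of `U₁ ∩ U₂` containing `γ(t₀)`, so by unique continuation
the germs of `K₁` and `K₂` agree at one point of `W` iff they agree at every point of `W`. As `W`
is open and `γ` continuous, whether `g₁ t = g₂ t` is therefore locally constant in `t`, hence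
constant on the connected interval `[a, b]`.
-/

theorem germAt_eq_iff {N : Type*} [TopologicalSpace N] [ChartedSpace H N]
    [LocallyConnectedSpace N] {p : N} {X Y : VF I N} :
    germAt I N p X = germAt I N p Y ↔
      ∃ V : Set N, IsOpen V ∧ IsConnected V ∧ p ∈ V ∧ ∀ x ∈ V, X x = Y x := by
  simp only [germAt, Submodule.mkQ_apply, Submodule.Quotient.eq]
  change (∃ V : Set N, IsOpen V ∧ IsConnected V ∧ p ∈ V ∧ ∀ x ∈ V, X x - Y x = 0) ↔ _
  simp only [sub_eq_zero]

namespace VFSheaf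

variable {F : VFSheaf I M} {U : Set M} {X Y : VF I M}

theorem sub_mem (hUo : IsOpen U) (hUc : IsConnected U) (hX : X ∈ F.carrier U)
    (hY : Y ∈ F.carrier U) : X - Y ∈ F.carrier U := by
  rw [sub_eq_add_neg, ← neg_one_smul ℝ Y]
  exact F.add_mem U hUo hUc X hX _ (F.smul_mem U hUo hUc (-1) Y hY)

variable [LocallyConnectedSpace M]

theorem UniqueContinuation.eqOn_of_germAt_eq (hUC : F.UniqueContinuation) (hUo : IsOpen U)
    (hUc : IsConnected U) (hX : X ∈ F.carrier U) (hY : Y ∈ F.carrier U) {p : M} (hp : p ∈ U)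
    (h : germAt I M p X = germAt I M p Y) : EqOn X Y U := by
  obtain ⟨V, hVo, -, hpV, hXY⟩ := germAt_eq_iff.mp h
  have hvanish : ∀ x ∈ U, (X - Y) x = 0 :=
    hUC U hUo hUc _ (sub_mem hUo hUc hX hY) ⟨V ∩ U, ⟨p, hpV, hp⟩, hVo.inter hUo,
      inter_subset_right, fun x hx => sub_eq_zero.mpr (hXY x hx.1)⟩
  exact fun x hx => sub_eq_zero.mp (hvanish x hx)

theorem UniqueContinuation.germAt_eq_iff_germAt_eq (hUC : F.UniqueContinuation)
    (hUo : IsOpen U) (hUc : IsConnected U) (hX : X ∈ F.carrier U) (hY : Y ∈ F.carrier U)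
    {p q : M} (hp : p ∈ U) (hq : q ∈ U) :
    germAt I M p X = germAt I M p Y ↔ germAt I M q X = germAt I M q Y := by
  have propagate : ∀ {p q : M}, p ∈ U → q ∈ U →
      germAt I M p X = germAt I M p Y → germAt I M q X = germAt I M q Y :=
    fun hp hq h => germAt_eq_iff.mpr
      ⟨U, hUo, hUc, hq, hUC.eqOn_of_germAt_eq hUo hUc hX hY hp h⟩
  exact ⟨propagate hp hq, propagate hq hp⟩

end VFSheaf

section

variable [LocallyConnectedSpace M]

/-- `IsTransport` along a curve parametrised by a subset `s` of any topological space. -/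
def IsTransportOn {α : Type*} [TopologicalSpace α] (F : VFSheaf I M) (s : Set α) (γ : α → M)
    (g : (t : α) → GermSpace I M (γ t)) : Prop :=
  ∀ t₀ ∈ s, ∃ U : Set M, ∃ K : VF I M, IsOpen U ∧ IsConnected U ∧ K ∈ F.carrier U ∧
    ∀ᶠ t in 𝓝[s] t₀, γ t ∈ U ∧ g t = germAt I M (γ t) K

theorem IsTransport.isTransportOn {F : VFSheaf I M} {a b : ℝ} {γ : ℝ → M}
    {g : (t : ℝ) → GermSpace I M (γ t)} (h : IsTransport F a b γ g) :
    IsTransportOn F (Icc a b) γ g := by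
  intro t₀ ht₀
  obtain ⟨ε, hε, U, K, hUo, hUc, hK, hg⟩ := h t₀ ht₀
  refine ⟨U, K, hUo, hUc, hK, ?_⟩
  have hball : Ioo (t₀ - ε) (t₀ + ε) ∈ 𝓝 t₀ :=
    Ioo_mem_nhds (sub_lt_self t₀ hε) (lt_add_of_pos_right t₀ hε)
  filter_upwards [nhdsWithin_le_nhds hball, self_mem_nhdsWithin] with t ht htab
  exact hg t ⟨ht, htab⟩

namespace IsTransportOn

variable {α : Type*} [TopologicalSpace α] {F : VFSheaf I M} {s : Set α} {γ : α → M}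
  {g₁ g₂ : (t : α) → GermSpace I M (γ t)}

theorem eventually_eq_iff (hUC : F.UniqueContinuation) (hγ : ContinuousOn γ s)
    (h₁ : IsTransportOn F s γ g₁) (h₂ : IsTransportOn F s γ g₂) {t₀ : α} (ht₀ : t₀ ∈ s) :
    ∀ᶠ t in 𝓝[s] t₀, (g₁ t₀ = g₂ t₀ ↔ g₁ t = g₂ t) := by
  obtain ⟨U₁, K₁, hU₁o, hU₁c, hK₁, hg₁⟩ := h₁ t₀ ht₀
  obtain ⟨U₂, K₂, hU₂o, hU₂c, hK₂, hg₂⟩ := h₂ t₀ ht₀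
  obtain ⟨hγU₁, hg₁t₀⟩ := hg₁.self_of_nhdsWithin ht₀
  obtain ⟨hγU₂, hg₂t₀⟩ := hg₂.self_of_nhdsWithin ht₀
  have hγU : γ t₀ ∈ U₁ ∩ U₂ := ⟨hγU₁, hγU₂⟩
  set W := connectedComponentIn (U₁ ∩ U₂) (γ t₀)
  have hWo : IsOpen W := (hU₁o.inter hU₂o).connectedComponentIn
  have hWc : IsConnected W := isConnected_connectedComponentIn_iff.mpr hγU
  have hWU : W ⊆ U₁ ∩ U₂ := connectedComponentIn_subset _ _
  have hK₁W : K₁ ∈ F.carrier W :=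
    F.restrict_mem U₁ hU₁o hU₁c W hWo hWc (hWU.trans inter_subset_left) K₁ hK₁
  have hK₂W : K₂ ∈ F.carrier W :=
    F.restrict_mem U₂ hU₂o hU₂c W hWo hWc (hWU.trans inter_subset_right) K₂ hK₂
  have hγW : ∀ᶠ t in 𝓝[s] t₀, γ t ∈ W :=
    (hγ t₀ ht₀).preimage_mem_nhdsWithin (hWo.mem_nhds (mem_connectedComponentIn hγU))
  filter_upwards [hg₁, hg₂, hγW] with t ht₁ ht₂ htW
  rw [hg₁t₀, hg₂t₀, ht₁.2, ht₂.2]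
  exact hUC.germAt_eq_iff_germAt_eq hWo hWc hK₁W hK₂W (mem_connectedComponentIn hγU) htW

theorem eq_of_eq_of_isPreconnected (hUC : F.UniqueContinuation) (hs : IsPreconnected s)
    (hγ : ContinuousOn γ s) (h₁ : IsTransportOn F s γ g₁) (h₂ : IsTransportOn F s γ g₂)
    {t₀ : α} (ht₀ : t₀ ∈ s) (heq : g₁ t₀ = g₂ t₀) {t : α} (ht : t ∈ s) : g₁ t = g₂ t :=
  (hs.induction₂ (fun t u => (g₁ t = g₂ t ↔ g₁ u = g₂ u))
    (fun _ ht => eventually_eq_iff hUC hγ h₁ h₂ ht) (fun _ _ _ _ _ _ => Iff.trans)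
    (fun _ _ _ _ => Iff.symm) ht₀ ht).mp heq

end IsTransportOn

end

theorem statement1_general [LocallyConnectedSpace M] (F : VFSheaf I M)
    (hUC : F.UniqueContinuation) (a b : ℝ) (γ : ℝ → M)
    (hγ : ContinuousOn γ (Icc a b))
    (g₁ g₂ : (t : ℝ) → GermSpace I M (γ t))
    (h₁ : IsTransport F a b γ g₁) (h₂ : IsTransport F a b γ g₂)
    (tstar : ℝ) (htstar : tstar ∈ Icc a b) (heq : g₁ tstar = g₂ tstar) :
    ∀ t ∈ Icc a b, g₁ t = g₂ t :=
  fun _ ht =>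
    h₁.isTransportOn.eq_of_eq_of_isPreconnected hUC isPreconnected_Icc hγ h₂.isTransportOn htstar
      heq ht

/-- Transports of `𝓕`-germs along a continuous path which agree at one
instant agree everywhere (for a sheaf with the unique continuation property). -/
theorem statement1 [LocallyConnectedSpace M] (F : VFSheaf I M)
    (hUC : F.UniqueContinuation) (a b : ℝ) (hab : a ≤ b) (γ : ℝ → M)
    (hγ : ContinuousOn γ (Icc a b))
    (g₁ g₂ : (t : ℝ) → GermSpace I M (γ t))
    (h₁ : IsTransport F a b γ g₁) (h₂ : IsTransport F a b γ g₂)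
    (tstar : ℝ) (htstar : tstar ∈ Icc a b) (heq : g₁ tstar = g₂ tstar) :
    ∀ t ∈ Icc a b, g₁ t = g₂ t :=
  statement1_general F hUC a b γ hγ g₁ g₂ h₁ h₂ tstar htstar heq
end
end

section
/- Let M be a smooth manifold and let 𝓕 be a sheaf of local vector fields on M having the unique continuation property. Let γ : [0,1] × [a,b] → M be a continuous map with γ(s,a) = p and γ(s,b) = q for all s ∈ [0,1], where p, q ∈ M are fixed points, and set γ_s := γ(s,·) : [a,b] → M. Fix 𝔤_a ∈ 𝔊^𝓕_p and assume that for every s ∈ [0,1] there exists a transport 𝔤^(s) of 𝓕-germs along γ_s with 𝔤^(s)_a = 𝔤_a. Then the germ 𝔤^(s)_b ∈ 𝔊^𝓕_q does not depend on s. -/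
open Set Manifold Topology

noncomputable section

variable {E : Type*} [NormedAddCommGroup E] [NormedSpace ℝ E]
  {H : Type*} [TopologicalSpace H]

variable (I : ModelWithCorners ℝ E H) (M : Type*) [TopologicalSpace M] [ChartedSpace H M]
  [IsManifold I (⊤ : ℕ∞) M]

variable {I M}

/-!
Unique continuation makes analytic continuation of germs rigid: two fields of the sheaf on a
connected open set whose germs agree at one point have the same germ everywhere on that set.
Hence a transport along a curve is induced, on every stretch of the curve staying inside a
connected open set `W`, by any field on `W` inducing it at one time.

Fix `s₀`. By connectedness of `[a, b]`, the property "some single field on a connected open set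
induces the germs `g s τ` for all `s` near `s₀`" propagates from `τ = a`, where all germs are
the common germ `ga`, to `τ = b`: near `(s₀, τ₀)` the homotopy stays in the domain of a field
inducing the transport along `γ s₀`, and that field, once it agrees with the transport of a
nearby curve `γ s` at one time, keeps agreeing with it. So the final germ is locally constant in
`s`, hence constant on `[0, 1]`.
-/

theorem IsPreconnected.iff_of_eventually_iff {α : Type*} [TopologicalSpace α] {s : Set α}
    (hs : IsPreconnected s) {Q : α → Prop} (h : ∀ x ∈ s, ∀ᶠ y in 𝓝[s] x, Q x ↔ Q y) {x y : α}
    (hx : x ∈ s) (hy : y ∈ s) : Q x ↔ Q y :=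
  hs.induction₂ (fun x y => Q x ↔ Q y) h (fun _ _ _ _ _ _ => Iff.trans)
    (fun _ _ _ _ => Iff.symm) hx hy

theorem eventually_nhdsWithin_forall_uIcc {J : Set ℝ} [J.OrdConnected] {x : ℝ} (hx : x ∈ J)
    {R : ℝ → Prop} (h : ∀ᶠ y in 𝓝[J] x, R y) : ∀ᶠ y in 𝓝[J] x, ∀ θ ∈ uIcc x y, R θ := by
  obtain ⟨ε, hε, hball⟩ := Metric.mem_nhdsWithin_iff.mp h
  have hN : (Metric.ball x ε ∩ J).OrdConnected := by
    rw [Real.ball_eq_Ioo]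
    infer_instance
  filter_upwards [inter_mem_nhdsWithin J (Metric.ball_mem_nhds x hε)] with y ⟨hyJ, hy⟩ θ hθ
  exact hball (hN.uIcc_subset ⟨Metric.mem_ball_self hε, hx⟩ ⟨hy, hyJ⟩ hθ)

theorem VFSheaf.sub_mem_s2 (F : VFSheaf I M) {U : Set M} (hU : IsOpen U) (hUc : IsConnected U)
    {K₁ K₂ : VF I M} (h₁ : K₁ ∈ F.carrier U) (h₂ : K₂ ∈ F.carrier U) :
    K₁ - K₂ ∈ F.carrier U := by
  simpa only [neg_one_smul, ← sub_eq_add_neg] using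
    F.add_mem U hU hUc K₁ h₁ _ (F.smul_mem U hU hUc (-1) K₂ h₂)

section Germs

variable [LocallyConnectedSpace M] {F : VFSheaf I M}

omit [IsManifold I (⊤ : ℕ∞) M] in
theorem germAt_eq_germAt_iff {x : M} {K₁ K₂ : VF I M} :
    germAt I M x K₁ = germAt I M x K₂ ↔
      ∃ V : Set M, IsOpen V ∧ IsConnected V ∧ x ∈ V ∧ ∀ y ∈ V, K₁ y = K₂ y := by
  rw [germAt, Submodule.mkQ_apply, Submodule.mkQ_apply, Submodule.Quotient.eq]
  change (∃ V : Set M, IsOpen V ∧ IsConnected V ∧ x ∈ V ∧ ∀ y ∈ V, K₁ y - K₂ y = 0) ↔ _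
  simp only [sub_eq_zero]

omit [IsManifold I (⊤ : ℕ∞) M] in
theorem cast_germAt {x y : M} (h : x = y) (K : VF I M) :
    cast (congrArg (GermSpace I M) h) (germAt I M x K) = germAt I M y K := by
  subst h
  rfl

omit [IsManifold I (⊤ : ℕ∞) M] in
theorem germAt_eq_iff_cast {x y : M} (h : x = y) (K : VF I M) (v : GermSpace I M x) :
    germAt I M x K = v ↔ germAt I M y K = cast (congrArg (GermSpace I M) h) v := by
  subst h
  rfl

theorem VFSheaf.UniqueContinuation.germAt_eq_of_germAt_eq (hUC : F.UniqueContinuation)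
    {A : Set M} (hA : IsOpen A) (hAc : IsConnected A) {K₁ K₂ : VF I M}
    (h₁ : K₁ ∈ F.carrier A) (h₂ : K₂ ∈ F.carrier A) {x y : M} (hx : x ∈ A) (hy : y ∈ A)
    (h : germAt I M x K₁ = germAt I M x K₂) : germAt I M y K₁ = germAt I M y K₂ := by
  obtain ⟨V, hV, -, hxV, hVeq⟩ := germAt_eq_germAt_iff.mp h
  have hzero := hUC A hA hAc _ (F.sub_mem_s2 hA hAc h₁ h₂)
    ⟨V ∩ A, ⟨x, hxV, hx⟩, hV.inter hA, inter_subset_right,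
      fun z hz => sub_eq_zero.mpr (hVeq z hz.1)⟩
  exact germAt_eq_germAt_iff.mpr ⟨A, hA, hAc, hy, fun z hz => sub_eq_zero.mp (hzero z hz)⟩

theorem VFSheaf.UniqueContinuation.eventually_germAt_eq_iff (hUC : F.UniqueContinuation)
    {X : Type*} [TopologicalSpace X] {c : X → M} {S : Set X} {t₀ : X}
    (hc : ContinuousWithinAt c S t₀) {W₁ W₂ : Set M} (hW₁ : IsOpen W₁) (hW₁c : IsConnected W₁)
    (hW₂ : IsOpen W₂) (hW₂c : IsConnected W₂) {K₁ K₂ : VF I M} (h₁ : K₁ ∈ F.carrier W₁)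
    (h₂ : K₂ ∈ F.carrier W₂) (hx₁ : c t₀ ∈ W₁) (hx₂ : c t₀ ∈ W₂) :
    ∀ᶠ t in 𝓝[S] t₀, (germAt I M (c t₀) K₁ = germAt I M (c t₀) K₂ ↔
      germAt I M (c t) K₁ = germAt I M (c t) K₂) := by
  set A := connectedComponentIn (W₁ ∩ W₂) (c t₀)
  have hA : IsOpen A := (hW₁.inter hW₂).connectedComponentIn
  have hAc : IsConnected A := isConnected_connectedComponentIn_iff.mpr ⟨hx₁, hx₂⟩
  have hxA : c t₀ ∈ A := mem_connectedComponentIn ⟨hx₁, hx₂⟩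
  have hK₁ : K₁ ∈ F.carrier A := F.restrict_mem W₁ hW₁ hW₁c A hA hAc
    ((connectedComponentIn_subset _ _).trans inter_subset_left) K₁ h₁
  have hK₂ : K₂ ∈ F.carrier A := F.restrict_mem W₂ hW₂ hW₂c A hA hAc
    ((connectedComponentIn_subset _ _).trans inter_subset_right) K₂ h₂
  filter_upwards [hc (hA.mem_nhds hxA)] with t ht
  exact ⟨hUC.germAt_eq_of_germAt_eq hA hAc hK₁ hK₂ hxA ht,
    hUC.germAt_eq_of_germAt_eq hA hAc hK₁ hK₂ ht hxA⟩

theorem IsTransport.eventually_eq_germAt {a b : ℝ} {c : ℝ → M}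
    {g : (t : ℝ) → GermSpace I M (c t)} (htr : IsTransport F a b c g) {t₀ : ℝ}
    (ht₀ : t₀ ∈ Icc a b) : ∃ U : Set M, ∃ K : VF I M, IsOpen U ∧ IsConnected U ∧
      K ∈ F.carrier U ∧ ∀ᶠ t in 𝓝[Icc a b] t₀, c t ∈ U ∧ g t = germAt I M (c t) K := by
  obtain ⟨ε, hε, U, K, hU, hUc, hK, hloc⟩ := htr t₀ ht₀
  refine ⟨U, K, hU, hUc, hK, Filter.mem_of_superset ?_ hloc⟩
  exact Filter.inter_mem (mem_nhdsWithin_of_mem_nhds (Ioo_mem_nhds (by linarith) (by linarith)))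
    self_mem_nhdsWithin

theorem IsTransport.germAt_eq_of_germAt_eq (hUC : F.UniqueContinuation) {a b : ℝ}
    {c : ℝ → M} (hc : ContinuousOn c (Icc a b)) {g : (t : ℝ) → GermSpace I M (c t)}
    (htr : IsTransport F a b c g) {T : Set ℝ} (hT : IsPreconnected T) (hTab : T ⊆ Icc a b)
    {W : Set M} (hW : IsOpen W) (hWc : IsConnected W) {K : VF I M} (hK : K ∈ F.carrier W)
    (hTW : ∀ θ ∈ T, c θ ∈ W) {u v : ℝ} (hu : u ∈ T) (hv : v ∈ T)
    (h : germAt I M (c u) K = g u) : germAt I M (c v) K = g v := by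
  refine (hT.iff_of_eventually_iff (Q := fun θ => germAt I M (c θ) K = g θ) (fun θ₀ hθ₀ => ?_) hu hv).mp h
  obtain ⟨U, L, hU, hUc, hL, hloc⟩ := htr.eventually_eq_germAt (hTab hθ₀)
  obtain ⟨hθ₀U, hgθ₀⟩ := hloc.self_of_nhdsWithin (hTab hθ₀)
  filter_upwards [nhdsWithin_mono _ hTab hloc, hUC.eventually_germAt_eq_iff
    ((hc θ₀ (hTab hθ₀)).mono hTab) hW hWc hU hUc hK hL (hTW θ₀ hθ₀) hθ₀U] with θ ⟨_, hgθ⟩ hiff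
  rw [hgθ₀, hgθ]
  exact hiff

end Germs

section Homotopy

variable [LocallyConnectedSpace M] {X : Type*} [TopologicalSpace X]

def EventuallyInduced (F : VFSheaf I M) (γ : X × ℝ → M)
    (g : (s : X) → (t : ℝ) → GermSpace I M (γ (s, t))) (l : Filter X) (τ : ℝ) : Prop :=
  ∃ W : Set M, ∃ K : VF I M, IsOpen W ∧ IsConnected W ∧ K ∈ F.carrier W ∧
    ∀ᶠ s in l, γ (s, τ) ∈ W ∧ germAt I M (γ (s, τ)) K = g s τ

variable {F : VFSheaf I M} {γ : X × ℝ → M} {g : (s : X) → (t : ℝ) → GermSpace I M (γ (s, t))}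
  {S : Set X} {a b : ℝ}

omit [LocallyConnectedSpace M] [IsManifold I (⊤ : ℕ∞) M] in
theorem ContinuousOn.continuousOn_slice (hγ : ContinuousOn γ (S ×ˢ Icc a b)) {s : X}
    (hs : s ∈ S) : ContinuousOn (fun t => γ (s, t)) (Icc a b) :=
  hγ.comp (continuousOn_const.prodMk continuousOn_id) fun _ ht => ⟨hs, ht⟩

theorem EventuallyInduced.eventually_germAt_eq (hUC : F.UniqueContinuation)
    (hγ : ContinuousOn γ (S ×ˢ Icc a b))
    (htr : ∀ s ∈ S, IsTransport F a b (fun t => γ (s, t)) (g s)) {s₀ : X} (hs₀ : s₀ ∈ S)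
    {y z : ℝ} (hy : y ∈ Icc a b) (hz : z ∈ Icc a b) (hind : EventuallyInduced F γ g (𝓝[S] s₀) y)
    {U : Set M} (hU : IsOpen U) (hUc : IsConnected U) {K : VF I M} (hK : K ∈ F.carrier U)
    (hUyz : ∀ᶠ s in 𝓝[S] s₀, ∀ θ ∈ uIcc y z, γ (s, θ) ∈ U)
    (hKy : germAt I M (γ (s₀, y)) K = g s₀ y) :
    ∀ᶠ s in 𝓝[S] s₀, γ (s, z) ∈ U ∧ germAt I M (γ (s, z)) K = g s z := by
  obtain ⟨W, L, hW, hWc, hL, hLy⟩ := hind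
  have hyU : γ (s₀, y) ∈ U := hUyz.self_of_nhdsWithin hs₀ y left_mem_uIcc
  obtain ⟨hyW, hLy₀⟩ := hLy.self_of_nhdsWithin hs₀
  have hcont : ContinuousWithinAt (fun s => γ (s, y)) S s₀ :=
    (hγ (s₀, y) ⟨hs₀, hy⟩).comp (f := fun s => (s, y))
      (continuous_id.prodMk continuous_const).continuousWithinAt fun _ hs => ⟨hs, hy⟩
  filter_upwards [hUyz, hLy, self_mem_nhdsWithin,
    hUC.eventually_germAt_eq_iff hcont hU hUc hW hWc hK hL hyU hyW] with s hsU ⟨_, hLs⟩ hs hiff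
  refine ⟨hsU z right_mem_uIcc, (htr s hs).germAt_eq_of_germAt_eq hUC
    (hγ.continuousOn_slice hs) isPreconnected_uIcc (uIcc_subset_Icc hy hz) hU hUc hK hsU
    left_mem_uIcc right_mem_uIcc ?_⟩
  rw [← hLs]
  exact hiff.mp (hKy.trans hLy₀.symm)

theorem EventuallyInduced.of_left (hUC : F.UniqueContinuation)
    (hγ : ContinuousOn γ (S ×ˢ Icc a b))
    (htr : ∀ s ∈ S, IsTransport F a b (fun t => γ (s, t)) (g s)) {s₀ : X} (hs₀ : s₀ ∈ S)
    (ha : EventuallyInduced F γ g (𝓝[S] s₀) a) {τ : ℝ} (hτ : τ ∈ Icc a b) :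
    EventuallyInduced F γ g (𝓝[S] s₀) τ := by
  refine (isPreconnected_Icc.iff_of_eventually_iff (fun τ₀ hτ₀ => ?_)
    (left_mem_Icc.mpr (hτ.1.trans hτ.2)) hτ).mp ha
  obtain ⟨U, K, hU, hUc, hK, hloc⟩ := (htr s₀ hs₀).eventually_eq_germAt hτ₀
  obtain ⟨hτ₀U, hg₀⟩ := hloc.self_of_nhdsWithin hτ₀
  have hγU : ∀ᶠ y in 𝓝[Icc a b] τ₀, ∀ᶠ s in 𝓝[S] s₀, ∀ θ ∈ uIcc τ₀ y, γ (s, θ) ∈ U := by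
    have hnhds := hγ (s₀, τ₀) ⟨hs₀, hτ₀⟩ (hU.mem_nhds hτ₀U)
    rw [nhdsWithin_prod_eq] at hnhds
    obtain ⟨pa, hpa, pb, hpb, hp⟩ := Filter.eventually_prod_iff.mp hnhds
    filter_upwards [eventually_nhdsWithin_forall_uIcc hτ₀ hpb] with y hy
    filter_upwards [hpa] with s hs θ hθ using hp hs (hy θ hθ)
  filter_upwards [hγU, hloc, self_mem_nhdsWithin] with y hyU ⟨_, hgy⟩ hy
  exact ⟨fun hind => ⟨U, K, hU, hUc, hK,
      hind.eventually_germAt_eq hUC hγ htr hs₀ hτ₀ hy hU hUc hK hyU hg₀.symm⟩,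
    fun hind => ⟨U, K, hU, hUc, hK, hind.eventually_germAt_eq hUC hγ htr hs₀ hy hτ₀ hU hUc hK
      (by simpa only [uIcc_comm] using hyU) hgy.symm⟩⟩

theorem eventuallyInduced_of_cast_eq (hab : a ≤ b)
    (htr : ∀ s ∈ S, IsTransport F a b (fun t => γ (s, t)) (g s)) {p : M}
    (hpa : ∀ s ∈ S, γ (s, a) = p) {ga : GermSpace I M p}
    (hin : ∀ s, ∀ hs : s ∈ S, cast (congrArg (GermSpace I M) (hpa s hs)) (g s a) = ga)
    {s₀ : X} (hs₀ : s₀ ∈ S) : EventuallyInduced F γ g (𝓝[S] s₀) a := by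
  obtain ⟨U, K, hU, hUc, hK, hloc⟩ := (htr s₀ hs₀).eventually_eq_germAt (left_mem_Icc.mpr hab)
  obtain ⟨hU₀, hg₀⟩ := hloc.self_of_nhdsWithin (left_mem_Icc.mpr hab)
  refine ⟨U, K, hU, hUc, hK, eventually_nhdsWithin_of_forall fun s hs => ⟨?_, ?_⟩⟩
  · rwa [hpa s hs, ← hpa s₀ hs₀]
  · rw [germAt_eq_iff_cast (hpa s hs), hin s hs, ← hin s₀ hs₀,
      ← germAt_eq_iff_cast (hpa s₀ hs₀), hg₀]

end Homotopy

/-- Homotopy invariance of transport of germs: given a continuous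
fixed-endpoints homotopy `γ : [0,1] × [a,b] → M` from `p` to `q` and transports `g s` of a
fixed germ `ga ∈ 𝔊^𝓕_p` along each `γ s = γ(s, ·)`, the final germ `g s b ∈ 𝔊^𝓕_q` does not
depend on `s`. -/
theorem statement2 [LocallyConnectedSpace M] (F : VFSheaf I M)
    (hUC : F.UniqueContinuation) (a b : ℝ) (hab : a ≤ b) (p q : M)
    (γ : ℝ × ℝ → M) (hγ : ContinuousOn γ (Icc (0:ℝ) 1 ×ˢ Icc a b))
    (hpa : ∀ s ∈ Icc (0:ℝ) 1, γ (s, a) = p) (hqb : ∀ s ∈ Icc (0:ℝ) 1, γ (s, b) = q)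
    (ga : GermSpace I M p)
    (g : (s : ℝ) → (t : ℝ) → GermSpace I M (γ (s, t)))
    (htr : ∀ s ∈ Icc (0:ℝ) 1, IsTransport F a b (fun t => γ (s, t)) (g s))
    (hin : ∀ s, ∀ hs : s ∈ Icc (0:ℝ) 1,
      cast (congrArg (GermSpace I M) (hpa s hs)) (g s a) = ga) :
    ∀ s₁, ∀ hs₁ : s₁ ∈ Icc (0:ℝ) 1, ∀ s₂, ∀ hs₂ : s₂ ∈ Icc (0:ℝ) 1,
      cast (congrArg (GermSpace I M) (hqb s₁ hs₁)) (g s₁ b) =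
        cast (congrArg (GermSpace I M) (hqb s₂ hs₂)) (g s₂ b) := by
  intro s₁ hs₁ s₂ hs₂
  have hend : ∀ s₀ ∈ Icc (0:ℝ) 1, ∃ K : VF I M, ∀ᶠ s in 𝓝[Icc (0:ℝ) 1] s₀,
      ∀ hs : s ∈ Icc (0:ℝ) 1, cast (congrArg (GermSpace I M) (hqb s hs)) (g s b) =
        germAt I M q K := by
    intro s₀ hs₀
    obtain ⟨W, K, -, -, -, hK⟩ := (eventuallyInduced_of_cast_eq hab htr hpa hin hs₀).of_left
      hUC hγ htr hs₀ (right_mem_Icc.mpr hab)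
    exact ⟨K, hK.mono fun s ⟨_, hs⟩ hsI => by rw [← hs]; exact cast_germAt (hqb s hsI) K⟩
  symm
  refine (isPreconnected_Icc.iff_of_eventually_iff (Q := fun s => ∀ hs : s ∈ Icc (0:ℝ) 1,
    cast (congrArg (GermSpace I M) (hqb s hs)) (g s b) =
      cast (congrArg (GermSpace I M) (hqb s₁ hs₁)) (g s₁ b)) (fun s₀ hs₀ => ?_) hs₁ hs₂).mp
    (fun _ => rfl) hs₂
  obtain ⟨K, hK⟩ := hend s₀ hs₀
  filter_upwards [hK, self_mem_nhdsWithin] with s hKs hs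
  rw [forall_prop_of_true hs₀, forall_prop_of_true hs, hK.self_of_nhdsWithin hs₀ hs₀, hKs hs]
end
end

section
/- Let M be a smooth manifold and let 𝓕 be an admissible sheaf of local vector fields on M. Then the map M → ℕ, p ↦ κ^𝓕_p, is lower semi-continuous; that is, every p ∈ M has an open neighborhood 𝒰 such that κ^𝓕_q ≥ κ^𝓕_p for all q ∈ 𝒰. -/
open Set Manifold Topology

noncomputable section

variable {E : Type*} [NormedAddCommGroup E] [NormedSpace ℝ E]
  {H : Type*} [TopologicalSpace H]

variable (I : ModelWithCorners ℝ E H) (M : Type*) [TopologicalSpace M] [ChartedSpace H M]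
  [IsManifold I ((⊤ : ℕ∞) : WithTop ℕ∞) M]

variable {I M}

theorem Cardinal.exists_eq_iSup_of_le_natCast {ι : Type*} [Nonempty ι] {f : ι → Cardinal}
    {N : ℕ} (h : ∀ i, f i ≤ N) : ∃ i, f i = ⨆ i, f i := by
  have hfin : (range f).Finite := by
    refine ((finite_Iic N).image ((↑) : ℕ → Cardinal)).subset ?_
    rintro _ ⟨i, rfl⟩
    obtain ⟨m, hmN, hm⟩ := Cardinal.exists_nat_eq_of_le_nat (h i)
    exact ⟨m, hmN, hm.symm⟩
  exact (range_nonempty f).csSup_mem hfin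

namespace VFSheaf.BoundedRank

variable {F : VFSheaf I M} (hF : F.BoundedRank)
include hF

theorem fdim_le_kappa {U : Set M} (hUo : IsOpen U) (hUc : IsConnected U) {q : M} (hq : q ∈ U) :
    fdim F U ≤ kappa F q := by
  obtain ⟨N, hN⟩ := hF
  refine le_ciSup (f := fun V : {U : Set M // IsOpen U ∧ IsConnected U ∧ q ∈ U} => fdim F V)
    ⟨N, ?_⟩ ⟨U, hUo, hUc, hq⟩
  rintro _ ⟨V, rfl⟩
  exact hN V V.2.1 V.2.2.1

theorem exists_fdim_eq_kappa {p : M} (hp : ∃ U : Set M, IsOpen U ∧ IsConnected U ∧ p ∈ U) :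
    ∃ U : Set M, IsOpen U ∧ IsConnected U ∧ p ∈ U ∧ fdim F U = kappa F p := by
  obtain ⟨N, hN⟩ := hF
  have := nonempty_subtype.mpr hp
  obtain ⟨⟨U, hUo, hUc, hpU⟩, hU⟩ := Cardinal.exists_eq_iSup_of_le_natCast
    fun V : {U : Set M // IsOpen U ∧ IsConnected U ∧ p ∈ U} => hN V V.2.1 V.2.2.1
  exact ⟨U, hUo, hUc, hpU, hU⟩

end VFSheaf.BoundedRank

/-- For an admissible sheaf `𝓕`, the map `p ↦ κ^𝓕_p` is lower
semi-continuous: every `p` has an open neighbourhood `𝒰` with `κ^𝓕_q ≥ κ^𝓕_p` for `q ∈ 𝒰`. -/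
theorem statement5 (F : VFSheaf I M) (hF : F.Admissible) (p : M) :
    ∃ 𝒰 : Set M, IsOpen 𝒰 ∧ p ∈ 𝒰 ∧ ∀ q ∈ 𝒰, kappa F p ≤ kappa F q := by
  by_cases hp : ∃ U : Set M, IsOpen U ∧ IsConnected U ∧ p ∈ U
  · -- Bounded rank makes the supremum `κ_p` a maximum, attained on some `U ∋ p`;
    -- `U` then competes in the supremum defining `κ_q` for every `q ∈ U`.
    obtain ⟨U, hUo, hUc, hpU, hU⟩ := hF.2.exists_fdim_eq_kappa hp
    exact ⟨U, hUo, hpU, fun q hq => hU ▸ hF.2.fdim_le_kappa hUo hUc hq⟩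
  · exact ⟨univ, isOpen_univ, mem_univ p, fun q _ => ciSup_le' fun U => (hp ⟨U, U.2⟩).elim⟩
end
end

section
/- Let M be a real-analytic manifold and let 𝓕 be an analytically determined real-analytic sheaf of local vector fields on M. Let U ⊆ M be a connected open set, let V ⊆ U be a non-empty connected open subset, and let X ∈ 𝔛^ω(U) be a real-analytic vector field on U. If X|_V belongs to 𝓕(V), then X belongs to 𝓕(U). -/
open Set Manifold Topology

noncomputable section

variable {E : Type*} [NormedAddCommGroup E] [NormedSpace ℝ E]
  {H : Type*} [TopologicalSpace H]

variable (I : ModelWithCorners ℝ E H) (M : Type*) [TopologicalSpace M] [ChartedSpace H M]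
  [IsManifold I ((⊤ : ℕ∞) : WithTop ℕ∞) M]

variable {I M}

section Analytic

variable {E₁ : Type*} [NormedAddCommGroup E₁] [NormedSpace ℝ E₁]
  {H₁ : Type*} [TopologicalSpace H₁]
  {E₂ : Type*} [NormedAddCommGroup E₂] [NormedSpace ℝ E₂]
  {H₂ : Type*} [TopologicalSpace H₂]

variable (I₁ : ModelWithCorners ℝ E₁ H₁) (I₂ : ModelWithCorners ℝ E₂ H₂)

/-- Real-analyticity, on a set `U`, of a map between charted spaces: around every point of `U`
the map, read in the preferred extended charts, is real-analytic (within the chart image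
of `U`). -/
def MAnalyticOn {M₁ : Type*} [TopologicalSpace M₁] [ChartedSpace H₁ M₁]
    {M₂ : Type*} [TopologicalSpace M₂] [ChartedSpace H₂ M₂]
    (f : M₁ → M₂) (U : Set M₁) : Prop :=
  ∀ x ∈ U, AnalyticWithinAt ℝ (writtenInExtChartAt I₁ I₂ x f)
    ((extChartAt I₁ x).symm ⁻¹' U ∩ Set.range I₁) (extChartAt I₁ x x)

variable {I₁} in
/-- A real-analytic vector field on `U ⊆ M`: the associated section of the tangent bundle is
real-analytic on `U`. -/
def AnalyticVFOn {M₁ : Type*} [TopologicalSpace M₁] [ChartedSpace H₁ M₁]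
    [IsManifold I₁ ((⊤ : ℕ∞) : WithTop ℕ∞) M₁] (X : VF I₁ M₁) (U : Set M₁) : Prop :=
  MAnalyticOn I₁ I₁.tangent (fun x => (⟨x, X x⟩ : TangentBundle I₁ M₁)) U

end Analytic

section AnalyticallyDetermined

variable [IsManifold I ((⊤ : ℕ∞) : WithTop ℕ∞) M]

/-- A sheaf of local vector fields is real-analytic if all its local fields are real-analytic
vector fields. -/
def VFSheaf.RealAnalytic (F : VFSheaf I M) : Prop :=
  ∀ U : Set M, IsOpen U → IsConnected U → ∀ X ∈ F.carrier U, AnalyticVFOn X U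

/-- A real-analytic sheaf `𝓕` is analytically determined if for every open set `U` there is a
collection `𝓐 U` of maps sending real-analytic vector fields on `U` to real-analytic functions
`U → ℝ` (depending only on the values of the field on `U`), such that (a) the restriction to an
open subset `V ⊆ U` of `Fn X`, `Fn ∈ 𝓐 U`, is realized by some member of `𝓐 V`, and (b) a
real-analytic vector field `X` on a connected open set `U` belongs to `𝓕(U)` if and only if
`Fn X` vanishes identically on `U` for all `Fn ∈ 𝓐 U`. -/
def VFSheaf.AnalyticallyDetermined (F : VFSheaf I M) : Prop :=
  ∃ 𝓐 : Set M → Set (VF I M → M → ℝ),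
    (∀ U : Set M, IsOpen U → ∀ Fn ∈ 𝓐 U, ∀ X : VF I M, AnalyticVFOn X U →
      MAnalyticOn I (𝓘(ℝ, ℝ)) (Fn X) U ∧
      ∀ Y : VF I M, AnalyticVFOn Y U → (∀ x ∈ U, X x = Y x) → ∀ x ∈ U, Fn X x = Fn Y x) ∧
    (∀ U V : Set M, IsOpen U → IsOpen V → V ⊆ U → ∀ Fn ∈ 𝓐 U,
      ∀ X : VF I M, AnalyticVFOn X U → ∃ Gn ∈ 𝓐 V, ∀ x ∈ V, Fn X x = Gn X x) ∧
    (∀ U : Set M, IsOpen U → IsConnected U → ∀ X : VF I M, AnalyticVFOn X U →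
      (X ∈ F.carrier U ↔ ∀ Fn ∈ 𝓐 U, ∀ x ∈ U, Fn X x = 0))

end AnalyticallyDetermined

/-!
Every defining function `Fn X` of the sheaf is real-analytic on `U`, and membership of `X|_V` in
`𝓕(V)` makes it vanish on the non-empty open set `V`. By the identity theorem it vanishes on the
connected set `U`, so `X ∈ 𝓕(U)`. The identity theorem on a manifold with corners is proved by the
usual open-closed argument on the set of points near which the function vanishes; closedness is
checked in a chart, where vanishing on a relatively open subset of `range I` propagates because
`range I` is the closure of its interior.
-/

section IdentityTheorem

variable {E : Type*} [NormedAddCommGroup E] [NormedSpace ℝ E] {H : Type*} [TopologicalSpace H]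
  {I : ModelWithCorners ℝ E H} {M : Type*} [TopologicalSpace M] [ChartedSpace H M]

theorem MAnalyticOn.mono {E' : Type*} [NormedAddCommGroup E'] [NormedSpace ℝ E']
    {H' : Type*} [TopologicalSpace H'] {I' : ModelWithCorners ℝ E' H'}
    {N : Type*} [TopologicalSpace N] [ChartedSpace H' N] {f : M → N} {s t : Set M}
    (hf : MAnalyticOn I I' f t) (hst : s ⊆ t) : MAnalyticOn I I' f s :=
  fun x hx => (hf x (hst hx)).mono (inter_subset_inter_left _ (preimage_mono hst))

theorem ModelWithCorners.nonempty_inter_interior_range {A : Set E} (hA : IsOpen A)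
    (hne : (A ∩ range I).Nonempty) : (A ∩ interior (range I)).Nonempty := by
  obtain ⟨z, hzA, hzI⟩ := hne
  obtain ⟨w, hwA, hwI⟩ := mem_closure_iff.mp (I.range_subset_closure_interior hzI) A hA hzA
  exact ⟨w, hwA, hwI⟩

variable {F : Type*} [NormedAddCommGroup F] [NormedSpace ℝ F]

theorem AnalyticOnNhd.eqOn_zero_of_eventuallyEq_zero_nhdsWithin_range {g : E → F} {B : Set E}
    (hg : AnalyticOnNhd ℝ g B) (hBo : IsOpen B) (hB : IsPreconnected B) {z : E} (hzB : z ∈ B)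
    (hzI : z ∈ range I) (h0 : g =ᶠ[𝓝[range I] z] 0) : EqOn g 0 B := by
  obtain ⟨A, hAo, hzA, hA0⟩ := mem_nhdsWithin.mp h0
  obtain ⟨w, ⟨hwA, hwB⟩, hwI⟩ :=
    I.nonempty_inter_interior_range (hAo.inter hBo) ⟨z, ⟨hzA, hzB⟩, hzI⟩
  have hw0 : g =ᶠ[𝓝 w] 0 :=
    Filter.eventually_of_mem ((hAo.inter isOpen_interior).mem_nhds ⟨hwA, hwI⟩)
      fun y hy => hA0 ⟨hy.1, interior_subset hy.2⟩
  exact hg.eqOn_zero_of_preconnected_of_eventuallyEq_zero hB hwB hw0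

variable {f : M → F} {U : Set M}

theorem writtenInExtChartAt_modelSpace (x : M) :
    writtenInExtChartAt I 𝓘(ℝ, F) x f = f ∘ (extChartAt I x).symm := by
  ext z
  simp [writtenInExtChartAt, chartAt_self_eq]

variable [CompleteSpace F]

theorem MAnalyticOn.exists_analyticOnNhd_ball (hf : MAnalyticOn I 𝓘(ℝ, F) f U) {x : M}
    (hx : x ∈ U) : ∃ g : E → F, ∃ r > 0, AnalyticOnNhd ℝ g (Metric.ball (extChartAt I x x) r) ∧
      ∀ z ∈ range I, (extChartAt I x).symm z ∈ U → f ((extChartAt I x).symm z) = g z := by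
  have hfx := hf x hx
  rw [writtenInExtChartAt_modelSpace] at hfx
  obtain ⟨g, -, hfg, hg⟩ := hfx.exists_analyticAt
  obtain ⟨r, hr, hgr⟩ := Metric.eventually_nhds_iff_ball.mp hg.eventually_analyticAt
  exact ⟨g, r, hr, hgr, fun z hzI hzU => hfg (mem_insert_of_mem _ ⟨hzU, hzI⟩)⟩

theorem MAnalyticOn.eventuallyEq_zero_of_frequently (hf : MAnalyticOn I 𝓘(ℝ, F) f U)
    (hU : IsOpen U) {x : M} (hx : x ∈ U) (h : ∃ᶠ y in 𝓝 x, f =ᶠ[𝓝 y] 0) : f =ᶠ[𝓝 x] 0 := by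
  set e := extChartAt I x
  obtain ⟨g, r, hr, hg, hfg⟩ := hf.exists_analyticOnNhd_ball hx
  have hfg' : ∀ m ∈ e.source ∩ U, f m = g (e m) := fun m ⟨hms, hmU⟩ => by
    rw [← hfg (e m) (mem_range_self _) (by rwa [e.left_inv hms]), e.left_inv hms]
  have hN : e.source ∩ e ⁻¹' Metric.ball (e x) r ∩ U ∈ 𝓝 x :=
    Filter.inter_mem (Filter.inter_mem (extChartAt_source_mem_nhds x)
      ((continuousAt_extChartAt x).preimage_mem_nhds (Metric.ball_mem_nhds _ hr)))
      (hU.mem_nhds hx)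
  obtain ⟨y, hy0, ⟨hys, hyr⟩, hyU⟩ := (h.and_eventually hN).exists
  have hg0 : g =ᶠ[𝓝[range I] e y] 0 := by
    have hpre : e.symm ⁻¹' ({m | f m = 0} ∩ U) ∈ 𝓝[range I] e y := by
      have hyU' : {m | f m = 0} ∩ U ∈ 𝓝 y := Filter.inter_mem hy0 (hU.mem_nhds hyU)
      exact (map_extChartAt_symm_nhdsWithin_range' hys).le hyU'
    filter_upwards [hpre, self_mem_nhdsWithin] with z ⟨hz0, hzU⟩ hzI
    rw [← hfg z hzI hzU]
    exact hz0
  have hgr : EqOn g 0 (Metric.ball (e x) r) :=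
    hg.eqOn_zero_of_eventuallyEq_zero_nhdsWithin_range Metric.isOpen_ball
      (convex_ball _ r).isPreconnected hyr (mem_range_self _) hg0
  filter_upwards [hN] with m ⟨⟨hms, hmr⟩, hmU⟩
  rw [hfg' m ⟨hms, hmU⟩, hgr hmr]
  rfl

theorem MAnalyticOn.eqOn_zero_of_preconnected_of_eventuallyEq_zero
    (hf : MAnalyticOn I 𝓘(ℝ, F) f U) (hU : IsOpen U) (hUc : IsPreconnected U) {x₀ : M}
    (hx₀ : x₀ ∈ U) (h0 : f =ᶠ[𝓝 x₀] 0) : EqOn f 0 U := by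
  set S := {x | f =ᶠ[𝓝 x] 0}
  have hS : U ⊆ S :=
    hUc.subset_of_closure_inter_subset isOpen_setOfPred_eventually_nhds ⟨x₀, hx₀, h0⟩
      fun x ⟨hxS, hxU⟩ => hf.eventuallyEq_zero_of_frequently hU hxU
        (mem_closure_iff_frequently.mp hxS)
  exact fun x hx => (hS hx).self_of_nhds

end IdentityTheorem

theorem statement12_general [IsManifold I (⊤ : WithTop ℕ∞) M] (F : VFSheaf I M)
    (had : F.AnalyticallyDetermined)
    (U : Set M) (hU : IsOpen U) (hUc : IsConnected U)
    (V : Set M) (hV : IsOpen V) (hVc : IsConnected V) (hVne : V.Nonempty) (hVU : V ⊆ U)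
    (X : VF I M) (hX : AnalyticVFOn X U) (hXV : X ∈ F.carrier V) :
    X ∈ F.carrier U := by
  obtain ⟨𝓐, h𝓐_analytic, h𝓐_restrict, h𝓐_iff⟩ := had
  obtain ⟨v, hv⟩ := hVne
  refine (h𝓐_iff U hU hUc X hX).mpr fun Fn hFn => ?_
  obtain ⟨Gn, hGn, hFnGn⟩ := h𝓐_restrict U V hU hV hVU Fn hFn X hX
  have hGn0 := (h𝓐_iff V hV hVc X (MAnalyticOn.mono hX hVU)).mp hXV Gn hGn
  have hFn0 : Fn X =ᶠ[𝓝 v] 0 :=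
    Filter.eventually_of_mem (hV.mem_nhds hv) fun x hx => (hFnGn x hx).trans (hGn0 x hx)
  exact (h𝓐_analytic U hU Fn hFn X hX).1.eqOn_zero_of_preconnected_of_eventuallyEq_zero hU
    hUc.isPreconnected (hVU hv) hFn0

/-- For an analytically determined real-analytic sheaf `𝓕` on a
real-analytic manifold `M`: if a real-analytic vector field `X` on a connected open set `U`
restricts on some non-empty connected open subset `V ⊆ U` to a field of `𝓕(V)`, then
`X ∈ 𝓕(U)`. -/
theorem statement12 [IsManifold I (⊤ : WithTop ℕ∞) M] (F : VFSheaf I M)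
    (hra : F.RealAnalytic) (had : F.AnalyticallyDetermined)
    (U : Set M) (hU : IsOpen U) (hUc : IsConnected U)
    (V : Set M) (hV : IsOpen V) (hVc : IsConnected V) (hVne : V.Nonempty) (hVU : V ⊆ U)
    (X : VF I M) (hX : AnalyticVFOn X U) (hXV : X ∈ F.carrier V) :
    X ∈ F.carrier U :=
  statement12_general F had U hU hUc V hV hVc hVne hVU X hX hXV
end
end
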